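/- Let F be any field. Then φ ∘ τ = ε_N ε_{N+1} · (τ' ∘ φ), where ε_R = (−1)^{R(R−1)/2} is the sign of the permutation of {1,…,R} reversing the positions in an R-tuple; in particular ε_N ε_{N+1} = (−1)^N. -/

import Mathlib

open MvPolynomial TensorProduct

set_option maxHeartbeats 1000000
set_option synthInstance.maxHeartbeats 400000

noncomputable section

/-- `Sym' F c` : the `c`-th symmetric power of `E = F²`, realised as the space of
homogeneous polynomials of degree `c` in the two variables `X = X 0`, `Y = X 1`. -/
abbrev Sym' (F : Type*) [Field F] (c : ℕ) : Type _ :=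
  ↥(MvPolynomial.homogeneousSubmodule (Fin 2) F c)

variable (F : Type*) [Field F]

/-- The basis monomial `X^(c-i) Y^i` of `Sym' F c`; it is `0` (junk) if `i > c`. -/
def XY (c i : ℕ) : Sym' F c :=
  if h : i ≤ c then
    ⟨(X 0 : MvPolynomial (Fin 2) F) ^ (c - i) * X 1 ^ i, by
      rw [MvPolynomial.mem_homogeneousSubmodule]
      have := ((isHomogeneous_X_pow (R := F) (0 : Fin 2) (c - i)).mul
        (isHomogeneous_X_pow (R := F) (1 : Fin 2) i))
      rwa [Nat.sub_add_cancel h] at this⟩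
  else 0

/-- `F_∧^{(c)}(k) = X^{c-k₁}Y^{k₁} ∧ ⋯ ∧ X^{c-k_r}Y^{k_r}` in `⋀^r (Sym' F c)`. -/
def wedge (c : ℕ) {r : ℕ} (k : Fin r → ℕ) : ⋀[F]^r (Sym' F c) :=
  ⟨ExteriorAlgebra.ιMulti F r fun a => XY F c (k a),
    ExteriorAlgebra.ιMulti_range F r (Set.mem_range_self _)⟩

/-- `F(i,j) = F_∧^{(d)}(i) ⊗ X^{d-j}Y^j`. -/
def Fp (d : ℕ) {N : ℕ} (i : Fin N → ℕ) (j : ℕ) :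
    (⋀[F]^N (Sym' F d)) ⊗[F] (Sym' F d) :=
  wedge F d i ⊗ₜ[F] XY F d j

/-- The multiplication map `μ_N : ⋀^N V ⊗ V → ⋀^{N+1} V` for `V = Sym' F c`. -/
def mu (c N : ℕ) :
    ((⋀[F]^N (Sym' F c)) ⊗[F] (Sym' F c)) →ₗ[F] ⋀[F]^(N + 1) (Sym' F c) :=
  TensorProduct.lift
    (LinearMap.mk₂ F
      (fun w v => ⟨(w : ExteriorAlgebra F (Sym' F c)) * ExteriorAlgebra.ι F v, by
        have h := Submodule.mul_mem_mul w.2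
          (LinearMap.mem_range_self (ExteriorAlgebra.ι F (M := Sym' F c)) v)
        rwa [← pow_succ] at h⟩)
      (fun w w' v => by ext; simp [add_mul])
      (fun a w v => by ext; simp [mul_assoc, Algebra.smul_mul_assoc])
      (fun w v v' => by ext; simp [mul_add])
      (fun a w v => by ext; simp [Algebra.mul_smul_comm]))

/-- The box `B(k) = [k₁,k₂) × ⋯ × [k_N, k_{N+1})` as a finset of multi-indices. -/
def box {N : ℕ} (k : Fin (N + 1) → ℕ) : Finset (Fin N → ℕ) :=
  Fintype.piFinset fun a : Fin N => Finset.Ico (k a.castSucc) (k a.succ)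

/-- `v_{(s,k)} = Σ_{i ∈ B(k)} F(i, s + |k| - N - |i|)`. -/
def vv (d N : ℕ) (s : ℕ) (k : Fin (N + 1) → ℕ) :
    (⋀[F]^N (Sym' F d)) ⊗[F] (Sym' F d) :=
  ∑ i ∈ box k, Fp F d i (s + (∑ a, k a) - N - ∑ a, i a)

/-- A pair `(i, j)` is semistandard (with entries in `{0,…,d}`). -/
def IsSS (d : ℕ) {N : ℕ} (p : (Fin N → ℕ) × ℕ) : Prop :=
  StrictMono p.1 ∧ (∀ a, p.1 a ≤ d) ∧ p.2 ≤ d ∧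
    ∀ a : Fin N, (a : ℕ) = 0 → p.1 a ≤ p.2

/-- The neighbour map `P`. -/
def Pmap {N : ℕ} (p : (Fin N → ℕ) × ℕ) : (Fin N → ℕ) × ℕ :=
  if h : (Finset.univ.filter fun a : Fin N => p.1 a ≤ p.2).Nonempty then
    let α := (Finset.univ.filter fun a : Fin N => p.1 a ≤ p.2).max' h
    (Function.update p.1 α p.2, p.1 α)
  else p

/-- `F_Δ(i,j)`. -/
def FDelta (d : ℕ) {N : ℕ} (p : (Fin N → ℕ) × ℕ) :
    (⋀[F]^N (Sym' F d)) ⊗[F] (Sym' F d) :=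
  if ∃ a, p.1 a = p.2 then Fp F d p.1 p.2
  else Fp F d p.1 p.2 + Fp F d (Pmap p).1 (Pmap p).2

/-- The content multiset of a pair. -/
def ssContent {N : ℕ} (p : (Fin N → ℕ) × ℕ) : Multiset ℕ :=
  p.2 ::ₘ Finset.univ.val.map p.1

abbrev Dom (N d : ℕ) : Type _ := (Sym' F (N - 1)) ⊗[F] ↥(⋀[F]^(N + 1) (Sym' F (d + 1)))

/-- The codomain `⋀^N Sym^d E ⊗ Sym^d E` of `φ`. -/
abbrev Cod (N d : ℕ) : Type _ := ↥(⋀[F]^N (Sym' F d)) ⊗[F] (Sym' F d)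

/-- The sign `ε_R = (-1)^{R(R-1)/2}` of the permutation of `{1,…,R}` reversing an `R`-tuple. -/
def eps (F : Type*) [Field F] (R : ℕ) : F := (-1 : F) ^ (R * (R - 1) / 2)

/-!
Both sides are linear, so it suffices to compare them on the spanning vectors
`X^{N-1-s}Y^s ⊗ F_∧(k)` with `k` strictly increasing. Write `k' = (d+1-k_{N+1}, …, d+1-k_1)`.
Reversing a wedge of length `R` costs the sign `ε_R`, so `τ` sends this vector to
`ε_{N+1} · X^s Y^{N-1-s} ⊗ F_∧(k')` and hence `φ ∘ τ` sends it to
`ε_{N+1} · v_{(N-1-s, k')}`.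
On the other side, `i ↦ (d-i_N, …, d-i_1)` is a bijection `B(k) → B(k')` which turns the
second index of each term `F(i, ·)` of `v_{(s,k)}` into the one of `v_{(N-1-s,k')}`, so
`τ' ∘ φ` sends it to `ε_N · v_{(N-1-s, k')}`. Since `ε_N² = 1`, the two differ by
`ε_N ε_{N+1}`.
-/

open Equiv

theorem Fin.revPerm_succ (n : ℕ) :
    (Fin.revPerm : Perm (Fin (n + 1))) =
      finRotate (n + 1) * (Fin.revPerm : Perm (Fin n)).viaFintypeEmbedding Fin.castSuccEmb := by
  ext i
  refine Fin.lastCases ?_ (fun x => ?_) i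
  · have hlast : (Fin.revPerm : Perm (Fin n)).viaFintypeEmbedding Fin.castSuccEmb (Fin.last n)
        = Fin.last n :=
      Perm.viaFintypeEmbedding_apply_notMem_range _ _ fun ⟨x, hx⟩ =>
        (Fin.castSucc_lt_last x).ne hx
    simp [hlast]
  · have hcast : (Fin.revPerm : Perm (Fin n)).viaFintypeEmbedding Fin.castSuccEmb x.castSucc
        = x.rev.castSucc := by
      simpa using
        Perm.viaFintypeEmbedding_apply_image (Fin.revPerm : Perm (Fin n)) Fin.castSuccEmb x
    simp only [Perm.mul_apply, hcast, finRotate_apply, Fin.coeSucc_eq_succ, Fin.rev_castSucc,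
      Fin.revPerm_apply]

theorem Fin.sign_revPerm (n : ℕ) :
    Perm.sign (Fin.revPerm : Perm (Fin n)) = (-1) ^ n.choose 2 := by
  induction n with
  | zero => rfl
  | succ n ih =>
    rw [Fin.revPerm_succ, map_mul, sign_finRotate, Perm.viaFintypeEmbedding_sign, ih,
      Nat.add_sub_cancel, Nat.choose_succ_succ', Nat.choose_one_right, pow_add, mul_comm]

theorem TensorProduct.span_image2_tmul_eq_top {R M N : Type*} [CommSemiring R]
    [AddCommMonoid M] [AddCommMonoid N] [Module R M] [Module R N] {s : Set M} {t : Set N}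
    (hs : Submodule.span R s = ⊤) (ht : Submodule.span R t = ⊤) :
    Submodule.span R (Set.image2 (· ⊗ₜ[R] ·) s t) = ⊤ := by
  rw [← top_le_iff, ← map₂_mk_top_top_eq_top, ← hs, ← ht, Submodule.map₂_span_span]
  rfl

def reflect {n : ℕ} (c : ℕ) (k : Fin n → ℕ) : Fin n → ℕ := fun a => c - k a.rev

section Reflect

variable {n c : ℕ} {k : Fin n → ℕ}

theorem reflect_le (c : ℕ) (k : Fin n → ℕ) (a : Fin n) : reflect c k a ≤ c := Nat.sub_le _ _

theorem reflect_reflect (hk : ∀ a, k a ≤ c) : reflect c (reflect c k) = k := by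
  funext a
  simp only [reflect, Fin.rev_rev]
  have := hk a
  omega

theorem strictMono_reflect (hk : StrictMono k) (hkc : ∀ a, k a ≤ c) :
    StrictMono (reflect c k) := by
  intro a b hab
  have := hk (Fin.rev_lt_rev.mpr hab)
  have := hkc a.rev
  simp only [reflect]
  omega

theorem sum_reflect_add_sum (hk : ∀ a, k a ≤ c) : ∑ a, reflect c k a + ∑ a, k a = n * c := by
  simp only [reflect]
  rw [Fintype.sum_equiv Fin.revPerm (fun a => c - k a.rev) (fun a => c - k a)
    (fun _ => rfl), ← Finset.sum_add_distrib]
  simp [Nat.sub_add_cancel (hk _)]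

end Reflect

theorem eps_mul_self (r : ℕ) : eps F r * eps F r = 1 := by
  rw [eps, ← pow_add, ← two_mul, pow_mul]
  simp

theorem eps_mul_eps_succ (N : ℕ) : eps F N * eps F (N + 1) = (-1) ^ N := by
  rw [eps, eps, ← Nat.choose_two_right, ← Nat.choose_two_right, Nat.choose_succ_succ',
    Nat.choose_one_right, ← pow_add,
    show N.choose 2 + (N + N.choose 2) = 2 * N.choose 2 + N by ring, pow_add, pow_mul]
  simp

theorem coe_XY {c i : ℕ} (hi : i ≤ c) :
    (XY F c i : MvPolynomial (Fin 2) F) =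
      monomial (Finsupp.single 0 (c - i) + Finsupp.single 1 i) 1 := by
  simp [XY, hi, X_pow_eq_monomial, monomial_mul]

theorem span_XY (c : ℕ) :
    Submodule.span F (Set.range fun j : Fin (c + 1) => XY F c j) = ⊤ := by
  apply Submodule.map_injective_of_injective (homogeneousSubmodule (Fin 2) F c).injective_subtype
  rw [Submodule.map_span, Submodule.map_subtype_top]
  conv_rhs => rw [homogeneousSubmodule_eq_finsupp_supported,
    AddMonoidAlgebra.supported_eq_span_single]
  rw [← Set.range_comp]
  congr 1
  ext p
  constructor
  · rintro ⟨j, rfl⟩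
    refine ⟨_, ?_, (coe_XY F (Nat.lt_succ_iff.mp j.2)).symm⟩
    simp only [Set.mem_ofPred_eq, map_add, Finsupp.degree_single]
    omega
  · rintro ⟨m, hm, rfl⟩
    have hm : m 0 + m 1 = c := by simpa [Finsupp.degree_eq_sum, Fin.sum_univ_two] using hm
    refine ⟨⟨m 1, by omega⟩, ?_⟩
    have hsplit : Finsupp.single 0 (c - m 1) + Finsupp.single 1 (m 1) = m := by
      ext a
      fin_cases a <;> simp
      omega
    change (XY F c (m 1) : MvPolynomial (Fin 2) F) = _
    rw [coe_XY F (by omega), hsplit]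
    rfl

theorem wedge_comp_perm (c : ℕ) {r : ℕ} (k : Fin r → ℕ) (σ : Perm (Fin r)) :
    wedge F c (k ∘ σ) = (Perm.sign σ : F) • wedge F c k := by
  apply Subtype.ext
  change ExteriorAlgebra.ιMulti F r ((fun a => XY F c (k a)) ∘ σ) = _
  rw [AlternatingMap.map_perm, Units.smul_def, ← Int.cast_smul_eq_zsmul F]
  rfl

theorem wedge_rev (c : ℕ) {r : ℕ} (k : Fin r → ℕ) :
    wedge F c (fun a => k a.rev) = eps F r • wedge F c k := by
  rw [show (fun a => k a.rev) = k ∘ Fin.revPerm from rfl, wedge_comp_perm, Fin.sign_revPerm, eps,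
    ← Nat.choose_two_right]
  push_cast
  rfl

theorem wedge_sub (c : ℕ) {r : ℕ} (k : Fin r → ℕ) :
    wedge F c (fun a => c - k a) = eps F r • wedge F c (reflect c k) := by
  rw [← wedge_rev]
  simp only [reflect, Fin.rev_rev]

theorem span_wedge_strictMono (c r : ℕ) :
    Submodule.span F
      {w | ∃ k : Fin r → ℕ, StrictMono k ∧ (∀ a, k a ≤ c) ∧ wedge F c k = w} = ⊤ := by
  refine top_le_iff.mp ((exteriorPower.ιMulti_family_span_of_span F (span_XY F c)).ge.trans ?_)
  refine Submodule.span_mono ?_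
  rintro _ ⟨s, rfl⟩
  let e := Set.powersetCard.ofFinEmbEquiv.symm s
  exact ⟨fun a => e a, Fin.val_strictMono.comp e.strictMono, fun a => Nat.lt_succ_iff.mp (e a).2,
    rfl⟩

section Box

variable {N d : ℕ} {k : Fin (N + 1) → ℕ} {i : Fin N → ℕ}

theorem mem_box_iff : i ∈ box k ↔ ∀ a, k a.castSucc ≤ i a ∧ i a < k a.succ := by
  simp [box]

theorem le_of_mem_box (hk : ∀ a, k a ≤ d + 1) (hi : i ∈ box k) (a : Fin N) : i a ≤ d := by
  have := (mem_box_iff.mp hi a).2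
  have := hk a.succ
  omega

theorem sum_add_le_sum_of_mem_box (hi : i ∈ box k) : ∑ a, i a + N ≤ ∑ a, k a :=
  calc ∑ a, i a + N = ∑ a, (i a + 1) := by simp [Finset.sum_add_distrib]
    _ ≤ ∑ a : Fin N, k a.succ := Finset.sum_le_sum fun a _ => (mem_box_iff.mp hi a).2
    _ ≤ ∑ a, k a := by simp [Fin.sum_univ_succ k]

theorem sum_le_sum_add_last_of_mem_box (hi : i ∈ box k) :
    ∑ a, k a ≤ ∑ a, i a + k (Fin.last N) := by
  rw [Fin.sum_univ_castSucc]
  gcongr with a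
  exact (mem_box_iff.mp hi a).1

theorem reflect_mem_box (hk : ∀ a, k a ≤ d + 1) (hi : i ∈ box k) :
    reflect d i ∈ box (reflect (d + 1) k) := by
  rw [mem_box_iff] at hi ⊢
  intro a
  have := hi a.rev
  have := hk a.rev.succ
  simp only [reflect, Fin.rev_castSucc, Fin.rev_succ]
  omega

end Box

theorem sum_Fp_reflect_eq_vv {N d s : ℕ} (hs : s < N) {k : Fin (N + 1) → ℕ}
    (hk : ∀ a, k a ≤ d + 1) :
    ∑ i ∈ box k, Fp F d (reflect d i) (d - (s + ∑ a, k a - N - ∑ a, i a)) =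
      vv F d N (N - 1 - s) (reflect (d + 1) k) := by
  refine Finset.sum_nbij' (reflect d) (reflect d) (fun i hi => reflect_mem_box hk hi)
    (fun i hi => reflect_reflect hk ▸ reflect_mem_box (reflect_le _ k) hi)
    (fun i hi => reflect_reflect (le_of_mem_box hk hi))
    (fun i hi => reflect_reflect (le_of_mem_box (reflect_le _ k) hi)) fun i hi => ?_
  have hK := sum_reflect_add_sum hk
  have hI := sum_reflect_add_sum (le_of_mem_box hk hi)
  have := sum_add_le_sum_of_mem_box hi
  have := sum_le_sum_add_last_of_mem_box hi
  have := hk (Fin.last N)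
  have hprod : (N + 1) * (d + 1) = N * d + N + d + 1 := by ring
  -- the box bounds keep every truncated subtraction in both second indices from cutting off
  congr 1
  omega

section Involutions

variable {F} {N d : ℕ}

theorem tau_tmul_wedge (τ : Dom F N d →ₗ[F] Dom F N d)
    (hτ : ∀ j ≤ N - 1, ∀ i : Fin (N + 1) → ℕ, (∀ a, i a ≤ d + 1) →
      τ (XY F (N - 1) j ⊗ₜ[F] wedge F (d + 1) i) =
        XY F (N - 1) (N - 1 - j) ⊗ₜ[F] wedge F (d + 1) (fun a => d + 1 - i a))
    {s : ℕ} (hs : s ≤ N - 1) {k : Fin (N + 1) → ℕ} (hk : ∀ a, k a ≤ d + 1) :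
    τ (XY F (N - 1) s ⊗ₜ[F] wedge F (d + 1) k) =
      eps F (N + 1) • XY F (N - 1) (N - 1 - s) ⊗ₜ[F] wedge F (d + 1) (reflect (d + 1) k) := by
  rw [hτ s hs k hk, wedge_sub, tmul_smul]

theorem tau'_vv (τ' : Cod F N d →ₗ[F] Cod F N d)
    (hτ' : ∀ j : Fin N → ℕ, (∀ a, j a ≤ d) → ∀ l ≤ d,
      τ' (wedge F d j ⊗ₜ[F] XY F d l) =
        wedge F d (fun a => d - j a) ⊗ₜ[F] XY F d (d - l))
    {s : ℕ} (hs : s < N) {k : Fin (N + 1) → ℕ} (hk : ∀ a, k a ≤ d + 1) :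
    τ' (vv F d N s k) = eps F N • vv F d N (N - 1 - s) (reflect (d + 1) k) := by
  rw [vv, map_sum, ← sum_Fp_reflect_eq_vv F hs hk, Finset.smul_sum]
  refine Finset.sum_congr rfl fun i hi => ?_
  have := sum_add_le_sum_of_mem_box hi
  have := sum_le_sum_add_last_of_mem_box hi
  have := hk (Fin.last N)
  rw [Fp, Fp, hτ' i (le_of_mem_box hk hi) _ (by omega), wedge_sub, smul_tmul']

theorem comp_tau_tmul_wedge (hN : 0 < N) (φ : Dom F N d →ₗ[F] Cod F N d)
    (hφ : ∀ s < N, ∀ k : Fin (N + 1) → ℕ, StrictMono k → (∀ a, k a ≤ d + 1) →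
      φ (XY F (N - 1) s ⊗ₜ[F] wedge F (d + 1) k) = vv F d N s k)
    (τ : Dom F N d →ₗ[F] Dom F N d)
    (hτ : ∀ j ≤ N - 1, ∀ i : Fin (N + 1) → ℕ, (∀ a, i a ≤ d + 1) →
      τ (XY F (N - 1) j ⊗ₜ[F] wedge F (d + 1) i) =
        XY F (N - 1) (N - 1 - j) ⊗ₜ[F] wedge F (d + 1) (fun a => d + 1 - i a))
    (τ' : Cod F N d →ₗ[F] Cod F N d)
    (hτ' : ∀ j : Fin N → ℕ, (∀ a, j a ≤ d) → ∀ l ≤ d,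
      τ' (wedge F d j ⊗ₜ[F] XY F d l) =
        wedge F d (fun a => d - j a) ⊗ₜ[F] XY F d (d - l))
    {s : ℕ} (hs : s < N) {k : Fin (N + 1) → ℕ} (hk : StrictMono k) (hkd : ∀ a, k a ≤ d + 1) :
    φ (τ (XY F (N - 1) s ⊗ₜ[F] wedge F (d + 1) k)) =
      (eps F N * eps F (N + 1)) • τ' (φ (XY F (N - 1) s ⊗ₜ[F] wedge F (d + 1) k)) := by
  rw [tau_tmul_wedge τ hτ (by omega) hkd, map_smul,
    hφ _ (by omega) _ (strictMono_reflect hk hkd) (reflect_le _ k), hφ s hs k hk hkd,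
    tau'_vv τ' hτ' hs hkd, smul_smul, mul_right_comm, eps_mul_self, one_mul]

end Involutions

/-- Lemma 2.10 of the paper, third equation. Over any field `F`,
`φ ∘ τ = ε_N ε_{N+1} · (τ' ∘ φ)`, where `ε_R = (-1)^{R(R-1)/2}`; in particular
`ε_N ε_{N+1} = (-1)^N`. -/
theorem statement12 (F : Type*) [Field F] (N d : ℕ) (hN : 0 < N)
    (φ : Dom F N d →ₗ[F] Cod F N d)
    (hφ : ∀ s < N, ∀ k : Fin (N + 1) → ℕ, StrictMono k → (∀ a, k a ≤ d + 1) →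
      φ (XY F (N - 1) s ⊗ₜ[F] wedge F (d + 1) k) = vv F d N s k)
    (τ : Dom F N d →ₗ[F] Dom F N d)
    (hτ : ∀ j ≤ N - 1, ∀ i : Fin (N + 1) → ℕ, (∀ a, i a ≤ d + 1) →
      τ (XY F (N - 1) j ⊗ₜ[F] wedge F (d + 1) i) =
        XY F (N - 1) (N - 1 - j) ⊗ₜ[F] wedge F (d + 1) (fun a => d + 1 - i a))
    (τ' : Cod F N d →ₗ[F] Cod F N d)
    (hτ' : ∀ j : Fin N → ℕ, (∀ a, j a ≤ d) → ∀ l ≤ d,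
      τ' (wedge F d j ⊗ₜ[F] XY F d l) =
        wedge F d (fun a => d - j a) ⊗ₜ[F] XY F d (d - l)) :
    (∀ x : Dom F N d, φ (τ x) = (eps F N * eps F (N + 1)) • τ' (φ x)) ∧
    eps F N * eps F (N + 1) = (-1 : F) ^ N := by
  have hcomp : φ ∘ₗ τ = (eps F N * eps F (N + 1)) • (τ' ∘ₗ φ) := by
    refine LinearMap.ext_on (TensorProduct.span_image2_tmul_eq_top (span_XY F (N - 1))
      (span_wedge_strictMono F (d + 1) (N + 1))) ?_
    rintro _ ⟨_, ⟨s, rfl⟩, _, ⟨k, hk, hkd, rfl⟩, rfl⟩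
    exact comp_tau_tmul_wedge hN φ hφ τ hτ τ' hτ' (by omega) hk hkd
  exact ⟨LinearMap.congr_fun hcomp, eps_mul_eps_succ F N⟩

end
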